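/- If ρ : Ω → ℝ is C² smooth, positive, and log ρ is subharmonic on an open set Ω ⊆ ℂ, then log(1 + ρ) is subharmonic on Ω. -/

import Mathlib

/-!
Since `Δ (log f) = (f Δf - |∇f|²) / f²`, subharmonicity of `log f` means `|∇f|² ≤ f Δf`,
which in particular forces `Δf ≥ 0`. Replacing `f` by `c + f` with `c ≥ 0` changes neither
`∇f` nor `Δf` and only increases the factor `f`, so the inequality persists.
-/

/-- The Laplacian of `f : ℂ → ℝ`, computed as the sum of second directional
derivatives in the directions `1` and `I`. -/
noncomputable def lap (f : ℂ → ℝ) (z : ℂ) : ℝ :=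
  fderiv ℝ (fun w => fderiv ℝ f w 1) z 1 +
    fderiv ℝ (fun w => fderiv ℝ f w Complex.I) z Complex.I

section SecondDerivLog

variable {E : Type*} [NormedAddCommGroup E] [NormedSpace ℝ E] {f : E → ℝ} {z : E}

theorem fderiv_fderiv_log_apply (hf : ContDiffAt ℝ 2 f z) (hfz : f z ≠ 0) (e : E) :
    fderiv ℝ (fun w => fderiv ℝ (fun u => Real.log (f u)) w e) z e
      = (f z * fderiv ℝ (fun w => fderiv ℝ f w e) z e - fderiv ℝ f z e ^ 2) / f z ^ 2 := by
  have hfderiv_log : (fun w => fderiv ℝ (fun u => Real.log (f u)) w e)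
      =ᶠ[nhds z] fun w => (f w)⁻¹ * fderiv ℝ f w e := by
    filter_upwards [hf.eventually (by simp), hf.continuousAt.eventually_ne hfz] with w hw hfw
    rw [((hw.differentiableAt (by norm_num)).hasFDerivAt.log hfw).fderiv]
    rfl
  have hinv : HasFDerivAt (fun w => (f w)⁻¹) (-(f z ^ 2)⁻¹ • fderiv ℝ f z) z :=
    (hasDerivAt_inv hfz).comp_hasFDerivAt z (hf.differentiableAt (by norm_num)).hasFDerivAt
  have hdf : DifferentiableAt ℝ (fun w => fderiv ℝ f w e) z :=
    ((hf.fderiv_right (m := 1) le_rfl).differentiableAt one_ne_zero).clm_apply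
      (differentiableAt_const e)
  have hprod : HasFDerivAt (fun w => (f w)⁻¹ * fderiv ℝ f w e) _ z := hinv.mul hdf.hasFDerivAt
  rw [hfderiv_log.fderiv_eq, hprod.fderiv]
  simp only [add_apply, smul_apply, smul_eq_mul]
  field_simp
  ring

end SecondDerivLog

theorem lap_log {f : ℂ → ℝ} {z : ℂ} (hf : ContDiffAt ℝ 2 f z) (hfz : f z ≠ 0) :
    lap (fun w => Real.log (f w)) z
      = (f z * lap f z - (fderiv ℝ f z 1 ^ 2 + fderiv ℝ f z Complex.I ^ 2)) / f z ^ 2 := by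
  rw [lap, lap, fderiv_fderiv_log_apply hf hfz, fderiv_fderiv_log_apply hf hfz]
  ring

theorem lap_const_add (c : ℝ) (f : ℂ → ℝ) : lap (fun w => c + f w) = lap f := by
  ext z
  simp only [lap, fderiv_const_add]

theorem mul_sub_div_sq_nonneg_of_le {ρ σ L Q : ℝ} (hρ : 0 < ρ) (hρσ : ρ ≤ σ) (hQ : 0 ≤ Q)
    (h : 0 ≤ (ρ * L - Q) / ρ ^ 2) : 0 ≤ (σ * L - Q) / σ ^ 2 := by
  rw [le_div_iff₀ (by positivity), zero_mul, sub_nonneg] at h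
  have hL : 0 ≤ L := nonneg_of_mul_nonneg_right (hQ.trans h) hρ
  exact div_nonneg (by nlinarith) (sq_nonneg σ)

theorem lap_log_const_add_nonneg {f : ℂ → ℝ} {z : ℂ} {c : ℝ} (hc : 0 ≤ c)
    (hf : ContDiffAt ℝ 2 f z) (hfz : 0 < f z) (hlog : 0 ≤ lap (fun w => Real.log (f w)) z) :
    0 ≤ lap (fun w => Real.log (c + f w)) z := by
  have hcf : ContDiffAt ℝ 2 (fun w => c + f w) z := contDiffAt_const.add hf
  rw [lap_log hf hfz.ne'] at hlog
  rw [lap_log hcf (by positivity), lap_const_add, fderiv_const_add]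
  exact mul_sub_div_sq_nonneg_of_le hfz (le_add_of_nonneg_left hc) (by positivity) hlog

/-- If `ρ` is `C²`, positive, and `log ρ` is subharmonic (`Δ log ρ ≥ 0`) on an open
set `Ω ⊆ ℂ`, then `log (1 + ρ)` is subharmonic on `Ω`. -/
theorem stmt_0 (Ω : Set ℂ) (hΩ : IsOpen Ω) (ρ : ℂ → ℝ)
    (hC2 : ContDiffOn ℝ 2 ρ Ω) (hpos : ∀ z ∈ Ω, 0 < ρ z)
    (hsub : ∀ z ∈ Ω, 0 ≤ lap (fun w => Real.log (ρ w)) z) :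
    ∀ z ∈ Ω, 0 ≤ lap (fun w => Real.log (1 + ρ w)) z := fun z hz =>
  lap_log_const_add_nonneg zero_le_one (hC2.contDiffAt (hΩ.mem_nhds hz)) (hpos z hz) (hsub z hz)
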